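/- Let λ be a cardinal such that Pr_{ω₁}(λ) holds. If B ⊆ 2^ω × 2^ω is an analytic set (in particular, a Borel set) containing a λ-square A × A with A ⊆ 2^ω of cardinality λ, then B contains a perfect square P × P with P ⊆ 2^ω a nonempty perfect set. -/

import Mathlib

open FirstOrder Cardinal

universe u

namespace Sh522

/-- `a ∈ clLt L M κ B` iff `a` is in the `<κ`-closure of `B` in `M`:
for some quantifier-free formula `φ(y, x₁, …, xₙ)` and parameters `b` from `B`,
`M ⊨ φ[a, b]` and the set of solutions of `φ(−, b)` has cardinality `< κ`. -/
def clLt (L : FirstOrder.Language.{u, u}) (M : Type u) [L.Structure M]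
    (κ : Cardinal.{u}) (B : Set M) : Set M :=
  {a | ∃ (n : ℕ) (φ : L.Formula (Fin (n + 1))),
      FirstOrder.Language.BoundedFormula.IsQF φ ∧
      ∃ b : Fin n → M, (∀ i, b i ∈ B) ∧
        φ.Realize (Fin.cons a b) ∧
        Cardinal.mk {x : M // φ.Realize (Fin.cons x b)} < κ}

/-- `rk^l(w, M; <κ) ≥ 0`. -/
def rkBase (L : FirstOrder.Language.{u, u}) (M : Type u) [L.Structure M]
    (κ : Cardinal.{u}) (w : Set M) : Prop :=
  w.Finite ∧ w.Nonempty ∧ ∀ a ∈ w, a ∉ clLt L M κ (w \ {a})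

/-- The successor step of the rank: `rk^l(w, M; <κ) ≥ β + 1` where `P` is
`rk^l(−, M; <κ) ≥ β`. -/
def rkStep (L : FirstOrder.Language.{u, u}) (M : Type u) [L.Structure M]
    (l : ℕ) (κ : Cardinal.{u}) (P : Set M → Prop) (w : Set M) : Prop :=
  w.Finite ∧ w.Nonempty ∧
  ∀ (n : ℕ) (a : Fin n → M), Function.Injective a → Set.range a = w →
    ∀ (k : Fin n) (φ : L.Formula (Fin n)),
      FirstOrder.Language.BoundedFormula.IsQF φ → φ.Realize a →
      ∃ b : Fin 2 → Fin n → M,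
        P (Set.range fun p : Fin 2 × Fin n => b p.1 p.2) ∧
        (∀ i : Fin 2, φ.Realize (b i)) ∧
        b 0 k ≠ b 1 k ∧
        (∀ m : Fin n, m ≠ k → b 0 m = b 1 m) ∧
        (l = 0 → ∀ m : Fin n, b 0 m = a m)

/-- `rkGe L M l κ α w` says `rk^l(w, M; <κ) ≥ α`. -/
noncomputable def rkGe (L : FirstOrder.Language.{u, u}) (M : Type u) [L.Structure M]
    (l : ℕ) (κ : Cardinal.{u}) (α : Ordinal.{u}) : Set M → Prop :=
  Ordinal.limitRecOn (motive := fun _ => Set M → Prop) α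
    (rkBase L M κ)
    (fun _ ih => rkStep L M l κ ih)
    (fun o _ ih w => ∀ (β : Ordinal.{u}) (h : β < o), ih β h w)

/-- `Pr l α lam bound θ` is `Pr^l_α(lam; <bound, θ)`: every model with universe of
cardinality `lam` and vocabulary of cardinality `≤ θ` has `rk^l(M; <bound) ≥ α`,
where `rk^l(M; <bound) = sup { rk^l(w, M; <bound) + 1 : w ∈ [M]* }`. -/
def Pr (l : ℕ) (α : Ordinal.{u}) (lam bound θ : Cardinal.{u}) : Prop :=
  ∀ (L : FirstOrder.Language.{u, u}) (M : Type u) (S : L.Structure M),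
    Cardinal.mk M = lam → L.card ≤ θ →
    ∀ β < α, ∃ w : Set M, w.Finite ∧ w.Nonempty ∧ @rkGe L M S l bound β w

/-!
Write `B = f(ω^ω)` with `f` continuous and pick witnesses `η x y` with `f (η x y) = (x, y)` for
`x, y ∈ A`. A configuration is a finite piece of information: initial segments of finitely many
points and of the witnesses of all pairs of them. Adding to `A` one relation per configuration
("this tuple is approximated by it") gives a structure in a countable language, so `Pr_{ω₁}(λ)`
yields finite sets of every rank `β < ω₁`, and a set of rank `≥ β` yields a configuration in the
`β`-th derivative: the configurations from which any point can be split in two, at any precision,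
staying inside lower derivatives. As there are only countably many configurations, the
derivatives stabilize below `ω₁` at a nonempty family closed under splitting. Splitting every
point at every stage builds a Cantor scheme whose branches converge to a continuous injection
`e` of `2^ω`; along any two branches `a, b` the witnesses converge as well, and by continuity of
`f` their limit is mapped to `(e a, e b)`. Hence `P = range e` works.
-/

open Filter Topology Function

section Cylinder

variable {α : Type*}

def cylinder (l : List α) : Set (ℕ → α) := {x | ∀ t (h : t < l.length), l[t] = x t}

def initSeg (x : ℕ → α) (k : ℕ) : List α := List.ofFn fun t : Fin k => x t

@[simp] lemma length_initSeg (x : ℕ → α) (k : ℕ) : (initSeg x k).length = k := by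
  simp [initSeg]

lemma cylinder_initSeg (x : ℕ → α) (k : ℕ) : cylinder (initSeg x k) = PiNat.cylinder x k := by
  ext y
  simp [cylinder, initSeg, PiNat.mem_cylinder_iff, eq_comm]

lemma initSeg_prefix {x y : ℕ → α} {k k' : ℕ} (hk : k ≤ k') (hy : y ∈ PiNat.cylinder x k) :
    initSeg x k <+: initSeg y k' := by
  rw [List.prefix_iff_eq_take]
  refine List.ext_getElem (by simp [hk]) fun t h _ => ?_
  simp only [length_initSeg] at h
  simp [initSeg, (PiNat.mem_cylinder_iff.1 hy t h).symm]

lemma prefix_of_le {l : ℕ → List α} (hmono : ∀ n, l n <+: l (n + 1)) {n n' : ℕ}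
    (h : n ≤ n') : l n <+: l n' := by
  induction h with
  | refl => exact List.prefix_rfl
  | step _ ih => exact ih.trans (hmono _)

def chainLimit [Inhabited α] (l : ℕ → List α) : ℕ → α := fun t => (l (t + 1)).getD t default

lemma chainLimit_mem_cylinder [Inhabited α] {l : ℕ → List α} (hmono : ∀ n, l n <+: l (n + 1))
    (hlen : ∀ n, n ≤ (l n).length) (n : ℕ) : chainLimit l ∈ cylinder (l n) := by
  intro t ht
  have ht' : t < (l (t + 1)).length := Nat.lt_of_lt_of_le t.lt_succ_self (hlen _)
  rw [chainLimit, List.getD_eq_getElem _ _ ht']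
  rcases le_total n (t + 1) with h | h
  · exact (prefix_of_le hmono h).getElem ht
  · exact ((prefix_of_le hmono h).getElem ht').symm

lemma tendsto_of_mem_cylinder [TopologicalSpace α] {l : ℕ → List α} {x : ℕ → ℕ → α}
    {y : ℕ → α} (hx : ∀ n, x n ∈ cylinder (l n)) (hy : ∀ n, y ∈ cylinder (l n))
    (hlen : ∀ n, n ≤ (l n).length) : Tendsto x atTop (𝓝 y) := by
  refine tendsto_pi_nhds.2 fun t => tendsto_const_nhds.congr' ?_
  filter_upwards [eventually_gt_atTop t] with n hn
  have ht : t < (l n).length := Nat.lt_of_lt_of_le hn (hlen n)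
  exact (hy n t ht).symm.trans (hx n t ht)

end Cylinder

lemma perfect_range_of_continuous_injective {X : Type*} [TopologicalSpace X] [T2Space X]
    {e : (ℕ → Bool) → X} (he : Continuous e) (hinj : Injective e) :
    Perfect (Set.range e) := by
  refine ⟨(isCompact_range he).isClosed, preperfect_iff_nhds.2 ?_⟩
  rintro _ ⟨a, rfl⟩ U hU
  let flipAt : ℕ → ℕ → Bool := fun n => update a n (!a n)
  have hflip : Tendsto flipAt atTop (𝓝 a) := by
    refine tendsto_pi_nhds.2 fun t => tendsto_const_nhds.congr' ?_
    filter_upwards [eventually_gt_atTop t] with n hn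
    exact (update_of_ne hn.ne _ _).symm
  obtain ⟨n, hn⟩ := ((he.tendsto a).comp hflip |>.eventually_mem hU).exists
  refine ⟨e (flipAt n), ⟨hn, flipAt n, rfl⟩, fun h => ?_⟩
  simpa [flipAt] using congrFun (hinj h) n

section Rank

variable {L : FirstOrder.Language.{u, u}} {M : Type u} [L.Structure M] {l : ℕ} {κ : Cardinal.{u}}

lemma rkGe_add_one (β : Ordinal.{u}) :
    rkGe L M l κ (β + 1) = rkStep L M l κ (rkGe L M l κ β) :=
  Ordinal.limitRecOn_add_one _ _ _ _

lemma rkGe_of_isSuccLimit {β : Ordinal.{u}} (hβ : Order.IsSuccLimit β) :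
    rkGe L M l κ β = fun w => ∀ γ < β, rkGe L M l κ γ w :=
  Ordinal.limitRecOn_limit _ _ _ _ hβ

lemma exists_rkStep_of_rkGe {β γ : Ordinal.{u}} {w : Set M} (hw : rkGe L M l κ β w)
    (hγ : γ < β) : ∃ γ', γ ≤ γ' ∧ γ' < β ∧ rkStep L M l κ (rkGe L M l κ γ') w := by
  rcases Ordinal.zero_or_succ_or_isSuccLimit β with rfl | ⟨β, rfl⟩ | hβ
  · simp at hγ
  · rw [Order.succ_eq_add_one, rkGe_add_one] at hw
    exact ⟨β, Order.lt_succ_iff.1 hγ, Order.lt_succ β, hw⟩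
  · rw [rkGe_of_isSuccLimit hβ] at hw
    have := hw _ (hβ.add_one_lt hγ)
    rw [rkGe_add_one] at this
    exact ⟨γ, le_rfl, hγ, this⟩

lemma exists_update_of_rkStep {P : Set M → Prop} {n : ℕ} {c : Fin n → M}
    (hc : Injective c) (hstep : rkStep L M 0 κ P (Set.range c)) (k : Fin n)
    {φ : L.Formula (Fin n)} (hφ : φ.IsQF) (hφc : φ.Realize c) :
    ∃ a, a ≠ c k ∧ φ.Realize (update c k a) ∧ P (insert a (Set.range c)) := by
  obtain ⟨b, hP, hR, hne, heq, h0⟩ := hstep.2.2 n c hc rfl k φ hφ hφc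
  have hb0 : b 0 = c := funext (h0 rfl)
  set a := b 1 k
  have hb1 : b 1 = update c k a := by
    funext m
    rcases eq_or_ne m k with rfl | hm
    · simp [a]
    · rw [update_of_ne hm, ← heq m hm, hb0]
  refine ⟨a, fun h => hne (by rw [hb0, h]), hb1 ▸ hR 1, ?_⟩
  convert hP using 1
  ext x
  simp only [Set.mem_insert_iff, Set.mem_range, Prod.exists, Fin.exists_fin_two, hb0, hb1]
  constructor
  · rintro (rfl | ⟨m, rfl⟩)
    · exact Or.inr ⟨k, by simp⟩
    · exact Or.inl ⟨m, rfl⟩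
  · rintro (⟨m, rfl⟩ | ⟨m, rfl⟩)
    · exact Or.inr ⟨m, rfl⟩
    · rcases eq_or_ne m k with rfl | hm
      · simp
      · exact Or.inr ⟨m, (update_of_ne hm _ _).symm⟩

end Rank

lemma Pr.nonempty {l : ℕ} {α : Ordinal.{0}} {lam κ θ : Cardinal.{0}} (h : Pr l α lam κ θ)
    (hα : 0 < α) {M : Type} (hM : #M = lam) : Nonempty M := by
  obtain ⟨_, -, ⟨x, -⟩, -⟩ := h Language.empty M Language.emptyStructure hM (by simp) 0 hα
  exact ⟨x⟩

lemma exists_lt_omega_one_subset_succ {X : Type u} [Countable X] {S : Ordinal.{u} → Set X}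
    (hS : Antitone S) : ∃ δ < (aleph 1).ord, S δ ⊆ S (Order.succ δ) := by
  by_contra! h
  choose x hx hxs using fun δ : Set.Iio (aleph 1).ord => Set.not_subset.1 (h δ δ.2)
  have hinj : Injective x := by
    intro δ δ' hδ
    by_contra hne
    rcases lt_or_gt_of_ne (Subtype.coe_ne_coe.2 hne) with hlt | hlt
    · exact hxs δ (hS (Order.succ_le_of_lt hlt) (hδ ▸ hx δ'))
    · exact hxs δ' (hS (Order.succ_le_of_lt hlt) (hδ ▸ hx δ))
  have hle := Cardinal.mk_le_of_injective (f := fun δ => ULift.up.{u + 1} (x δ))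
    (fun _ _ h => hinj (ULift.up_injective h))
  rw [Cardinal.mk_Iio_ordinal, Cardinal.card_ord, Cardinal.mk_uLift] at hle
  have := hle.trans (Cardinal.lift_le.2 (Cardinal.mk_le_aleph0 (α := X)))
  rw [Cardinal.lift_aleph0, ← Cardinal.lift_aleph0.{u + 1, u}, Cardinal.lift_le] at this
  exact this.not_gt Cardinal.aleph0_lt_aleph_one

section Separation

variable {ι α : Type*}

def SeparatedAt (k : ℕ) (x : ι → ℕ → α) : Prop := Pairwise fun i j => x j ∉ PiNat.cylinder (x i) k

lemma eventually_separatedAt [Finite ι] {x : ι → ℕ → α} (hx : Injective x) :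
    ∀ᶠ k in atTop, SeparatedAt k x := by
  have hpair : ∀ p : ι × ι, ∀ᶠ k in atTop, p.1 ≠ p.2 → x p.2 ∉ PiNat.cylinder (x p.1) k := by
    rintro ⟨i, j⟩
    by_cases hij : i = j
    · exact Eventually.of_forall fun _ h => (h hij).elim
    obtain ⟨t, ht⟩ := Function.ne_iff.1 (hx.ne hij)
    filter_upwards [eventually_gt_atTop t] with k hk _ hmem
    exact ht (PiNat.mem_cylinder_iff.1 hmem t hk).symm
  filter_upwards [eventually_all.2 hpair] with k hk i j hij
  exact hk (i, j) hij

lemma disjoint_cylinder_of_not_mem {x y : ℕ → α} {k : ℕ} (h : y ∉ PiNat.cylinder x k) :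
    Disjoint (PiNat.cylinder x k) (PiNat.cylinder y k) := by
  refine Set.disjoint_left.2 fun z hx hy => h ?_
  rw [PiNat.mem_cylinder_iff_eq] at hx hy ⊢
  rw [← hx, hy]

end Separation

/-- `n` points of `2^ω`, each known up to an initial segment, and for every ordered pair of them
an initial segment of a point of `ω^ω` that is meant to be mapped onto the pair. -/
structure Config (n : ℕ) where
  pt : Fin n → List Bool
  wit : Fin n → Fin n → List ℕ

instance (n : ℕ) : Countable (Config n) :=
  Injective.countable (f := fun q : Config n => (q.pt, q.wit)) fun q q' h => by
    cases q; cases q'; simp_all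

namespace Config

variable {n n' n'' : ℕ}

def Separated (q : Config n) : Prop :=
  Pairwise fun i j => Disjoint (cylinder (q.pt i)) (cylinder (q.pt j))

def Witnessed (f : (ℕ → ℕ) → (ℕ → Bool) × (ℕ → Bool)) (q : Config n) : Prop :=
  ∀ i j, ∃ ν ∈ cylinder (q.wit i j), f ν ∈ cylinder (q.pt i) ×ˢ cylinder (q.pt j)

/-- `q'` refines `q` when point `j` of `q'` descends from point `p j` of `q`. Two different
descendants of one point are a new pair, whose witness need not extend an old one. -/
def Refines (q : Config n) (q' : Config n') (p : Fin n' → Fin n) : Prop :=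
  (∀ j, q.pt (p j) <+: q'.pt j) ∧
    ∀ j j', (p j ≠ p j' ∨ j = j') → q.wit (p j) (p j') <+: q'.wit j j'

lemma Refines.refl (q : Config n) : q.Refines q id :=
  ⟨fun _ => List.prefix_rfl, fun _ _ _ => List.prefix_rfl⟩

lemma Refines.trans {q : Config n} {q' : Config n'} {q'' : Config n''} {p : Fin n' → Fin n}
    {p' : Fin n'' → Fin n'} (h : q.Refines q' p) (h' : q'.Refines q'' p') :
    q.Refines q'' (p ∘ p') := by
  refine ⟨fun j => (h.1 _).trans (h'.1 j), fun j j' hjj' => ?_⟩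
  have hp' : p' j ≠ p' j' ∨ j = j' := by
    rcases hjj' with hne | rfl
    · exact Or.inl fun he => hne (congrArg p he)
    · exact Or.inr rfl
  have hp : p (p' j) ≠ p (p' j') ∨ p' j = p' j' := by
    rcases hjj' with hne | rfl
    · exact Or.inl hne
    · exact Or.inr rfl
  exact (h.2 _ _ hp).trans (h'.2 j j' hp')

def LengthAtLeast (K : ℕ) (q : Config n) : Prop :=
  (∀ i, K ≤ (q.pt i).length) ∧ ∀ i j, K ≤ (q.wit i j).length

/-- `q'` arises from `q` by splitting point `i` in two, the new copy being the last point. -/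
def SplitsTo (q : Config n) (q' : Config (n + 1)) (i : Fin n) (K : ℕ) : Prop :=
  q.Refines q' (Fin.lastCases i id) ∧ q'.LengthAtLeast K

end Config

def IsSplitClosed (G : Set (Σ n, Config n)) : Prop :=
  ∀ q ∈ G, ∀ i K, ∃ q' : Config (q.1 + 1), ⟨_, q'⟩ ∈ G ∧ q.2.SplitsTo q' i K

/-- The analogue of `rk ≥ β` for configurations. -/
def derived (f : (ℕ → ℕ) → (ℕ → Bool) × (ℕ → Bool)) (β : Ordinal.{0}) :
    Set (Σ n, Config n) :=
  {q | q.2.Separated ∧ q.2.Witnessed f ∧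
    ∀ γ < β, ∀ i K, ∃ q' : Config (q.1 + 1), ⟨_, q'⟩ ∈ derived f γ ∧ q.2.SplitsTo q' i K}
termination_by β

variable {f : (ℕ → ℕ) → (ℕ → Bool) × (ℕ → Bool)}

lemma derived_antitone : Antitone (derived f) := by
  intro γ β hγβ q hq
  rw [derived] at hq ⊢
  exact ⟨hq.1, hq.2.1, fun δ hδ => hq.2.2 δ (hδ.trans_le hγβ)⟩

lemma isSplitClosed_derived {δ : Ordinal.{0}} (h : derived f δ ⊆ derived f (Order.succ δ)) :
    IsSplitClosed (derived f δ) := by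
  intro q hq
  have := h hq
  rw [derived] at this
  exact this.2.2 δ (Order.lt_succ δ)

def configLanguage : FirstOrder.Language.{0, 0} := ⟨fun _ => Empty, Config⟩

instance : Countable configLanguage.Symbols := by
  unfold Language.Symbols configLanguage
  infer_instance

lemma card_configLanguage : configLanguage.card ≤ ℵ₀ := Cardinal.mk_le_aleph0

section Soundness

variable {A : Set (ℕ → Bool)} (η : A → A → ℕ → ℕ)

def Config.IsApprox {n : ℕ} (q : Config n) (x : Fin n → A) : Prop :=
  (∀ i, (x i : ℕ → Bool) ∈ cylinder (q.pt i)) ∧ ∀ i j, η (x i) (x j) ∈ cylinder (q.wit i j)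

@[reducible] def configStructure : configLanguage.Structure A where
  funMap f := Empty.elim f
  RelMap q x := q.IsApprox η x

def Config.formula {n : ℕ} (q : Config n) : configLanguage.Formula (Fin n) :=
  Language.Relations.formula (L := configLanguage) q fun i => Language.Term.var i

lemma Config.isQF_formula {n : ℕ} (q : Config n) : q.formula.IsQF :=
  (Language.BoundedFormula.IsAtomic.rel _ _).isQF

lemma Config.realize_formula {n : ℕ} (q : Config n) (x : Fin n → A) :
    @Language.Formula.Realize _ _ (configStructure η) _ q.formula x ↔ q.IsApprox η x := by
  let := configStructure η
  exact Language.Formula.realize_rel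

def initConfig {n : ℕ} (c : Fin n → A) (k m : ℕ) : Config n :=
  ⟨fun i => initSeg (c i) k, fun i j => initSeg (η (c i) (c j)) m⟩

variable {η} {n : ℕ} {c : Fin n → A} {k m : ℕ}

lemma isApprox_initConfig_iff {x : Fin n → A} :
    (initConfig η c k m).IsApprox η x ↔ (∀ i, (x i : ℕ → Bool) ∈ PiNat.cylinder (c i) k) ∧
      ∀ i j, η (x i) (x j) ∈ PiNat.cylinder (η (c i) (c j)) m := by
  simp only [Config.IsApprox, initConfig, cylinder_initSeg]

lemma isApprox_initConfig_self : (initConfig η c k m).IsApprox η c :=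
  isApprox_initConfig_iff.2
    ⟨fun _ => PiNat.self_mem_cylinder _ _, fun _ _ => PiNat.self_mem_cylinder _ _⟩

lemma separated_initConfig (hc : SeparatedAt k fun i => (c i : ℕ → Bool)) :
    (initConfig η c k m).Separated := by
  intro i j hij
  simp only [initConfig, cylinder_initSeg]
  exact disjoint_cylinder_of_not_mem (hc hij)

lemma witnessed_initConfig (hη : ∀ x y, f (η x y) = ((x : ℕ → Bool), (y : ℕ → Bool))) :
    (initConfig η c k m).Witnessed f := by
  intro i j
  refine ⟨η (c i) (c j), ?_, ?_⟩ <;>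
    simp [initConfig, cylinder_initSeg, hη]

lemma lengthAtLeast_initConfig {K : ℕ} (hk : K ≤ k) (hm : K ≤ m) :
    (initConfig η c k m).LengthAtLeast K :=
  ⟨fun _ => by simpa [initConfig] using hk, fun _ _ => by simpa [initConfig] using hm⟩

lemma refines_initConfig_snoc {i : Fin n} {a : A} {k' m' : ℕ}
    (ha : (initConfig η c k m).IsApprox η (update c i a)) (hk : k ≤ k') (hm : m ≤ m') :
    (initConfig η c k m).Refines (initConfig η (Fin.snoc c a) k' m') (Fin.lastCases i id) := by
  rw [isApprox_initConfig_iff] at ha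
  obtain ⟨hpt, hwit⟩ := ha
  have hpt_i : (a : ℕ → Bool) ∈ PiNat.cylinder (c i) k := by simpa using hpt i
  refine ⟨fun j => initSeg_prefix hk ?_, fun j j' hjj' => initSeg_prefix hm ?_⟩
  · cases j using Fin.lastCases <;> simp [hpt_i]
  -- apart from the new pair `(i, a)`, each pair is one of `c` or of `update c i a`
  · cases j using Fin.lastCases with
    | last =>
      cases j' using Fin.lastCases with
      | last => simpa using hwit i i
      | cast j' =>
        have hj' : j' ≠ i := by
          simpa using (hjj'.resolve_right (Fin.castSucc_ne_last j').symm).symm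
        simpa [update_of_ne hj'] using hwit i j'
    | cast j =>
      cases j' using Fin.lastCases with
      | last =>
        have hj : j ≠ i := by simpa using hjj'.resolve_right (Fin.castSucc_ne_last j)
        simpa [update_of_ne hj] using hwit j i
      | cast j' => simp

lemma injective_snoc_of_isApprox {i : Fin n} {a : A} (hc : Injective c)
    (hsep : SeparatedAt k fun i => (c i : ℕ → Bool)) (hai : a ≠ c i)
    (ha : (initConfig η c k m).IsApprox η (update c i a)) :
    Injective (Fin.snoc c a : Fin (n + 1) → A) := by
  refine Fin.snoc_injective_iff.2 ⟨hc, ?_⟩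
  rintro ⟨j, rfl⟩
  have hmem : (c j : ℕ → Bool) ∈ PiNat.cylinder (c i) k := by
    simpa using (isApprox_initConfig_iff.1 ha).1 i
  rcases eq_or_ne i j with rfl | hij
  · exact hai rfl
  · exact hsep hij hmem

lemma exists_splitsTo_of_rkStep {γ : Ordinal.{0}}
    (ih : ∀ {n'} (c' : Fin n' → A) (k' m' : ℕ), Injective c' →
      SeparatedAt k' (fun i => (c' i : ℕ → Bool)) →
      @rkGe _ _ (configStructure η) 0 (aleph 1) γ (Set.range c') →
      ⟨n', initConfig η c' k' m'⟩ ∈ derived f γ)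
    (hc : Injective c) (hsep : SeparatedAt k fun i => (c i : ℕ → Bool))
    (hstep : @rkStep _ _ (configStructure η) 0 (aleph 1)
      (@rkGe _ _ (configStructure η) 0 (aleph 1) γ) (Set.range c))
    (i : Fin n) (K : ℕ) :
    ∃ q' : Config (n + 1), ⟨_, q'⟩ ∈ derived f γ ∧ (initConfig η c k m).SplitsTo q' i K := by
  let := configStructure η
  -- apply the rank step to the relation of `initConfig η c k m` itself, so that the moved
  -- point keeps the approximation of the point it replaces
  obtain ⟨a, hai, ha, hrk⟩ := exists_update_of_rkStep hc hstep i
    (initConfig η c k m).isQF_formula ((Config.realize_formula η _ c).2 isApprox_initConfig_self)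
  rw [Config.realize_formula] at ha
  have hinj := injective_snoc_of_isApprox hc hsep hai ha
  obtain ⟨k', hk'sep, hk'⟩ := ((eventually_separatedAt (Subtype.val_injective.comp hinj)).and
    (eventually_ge_atTop (max k K))).exists
  refine ⟨initConfig η (Fin.snoc c a) k' (max m K),
    ih _ _ _ hinj hk'sep (by rwa [Fin.range_snoc]), ?_⟩
  exact ⟨refines_initConfig_snoc ha (le_of_max_le_left hk') (le_max_left _ _),
    lengthAtLeast_initConfig (le_of_max_le_right hk') (le_max_right _ _)⟩

variable (hη : ∀ x y, f (η x y) = ((x : ℕ → Bool), (y : ℕ → Bool)))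
include hη

theorem initConfig_mem_derived (β : Ordinal.{0}) :
    ∀ {n} (c : Fin n → A) (k m : ℕ), Injective c →
      SeparatedAt k (fun i => (c i : ℕ → Bool)) →
      @rkGe _ _ (configStructure η) 0 (aleph 1) β (Set.range c) →
      ⟨n, initConfig η c k m⟩ ∈ derived f β := by
  induction β using WellFoundedLT.induction with
  | _ β ih =>
  intro n c k m hc hsep hrk
  let := configStructure η
  rw [derived]
  refine ⟨separated_initConfig hsep, witnessed_initConfig hη, fun γ hγ i K => ?_⟩
  obtain ⟨γ', hγγ', hγ'β, hstep⟩ := exists_rkStep_of_rkGe hrk hγ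
  obtain ⟨q', hq', hsplit⟩ := exists_splitsTo_of_rkStep (ih γ' hγ'β) hc hsep hstep i K
  exact ⟨q', derived_antitone hγγ' hq', hsplit⟩

theorem exists_mem_derived_of_rkGe {β : Ordinal.{0}} {w : Set A} (hw : w.Finite)
    (hne : w.Nonempty) (hrk : @rkGe _ _ (configStructure η) 0 (aleph 1) β w) :
    ∃ q ∈ derived f β, 0 < q.1 := by
  have := hw.to_subtype
  have := hne.to_subtype
  let c : Fin (Nat.card w) → A := Subtype.val ∘ (Finite.equivFin w).symm
  have hc : Injective c := Subtype.val_injective.comp (Finite.equivFin w).symm.injective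
  have hcw : Set.range c = w := by
    rw [Set.range_comp, (Finite.equivFin w).symm.range_eq_univ, Set.image_univ,
      Subtype.range_coe]
  obtain ⟨k, hk⟩ := (eventually_separatedAt (Subtype.val_injective.comp hc)).exists
  exact ⟨_, initConfig_mem_derived hη β c k 0 hc hk (by rwa [hcw]), Nat.card_pos⟩

end Soundness

section CantorScheme

variable {G : Set (Σ n, Config n)}

lemma exists_refines_split (hG : IsSplitClosed G) {N : ℕ} {q : Config N} (hq : ⟨N, q⟩ ∈ G)
    (K : ℕ) (S : Finset (Fin N)) :
    ∃ (N' : ℕ) (q' : Config N') (p : Fin N' → Fin N) (σ : Bool → Fin N → Fin N'),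
      ⟨N', q'⟩ ∈ G ∧ q.Refines q' p ∧ (∀ b i, p (σ b i) = i) ∧
        (∀ i ∈ S, σ false i ≠ σ true i) ∧ (S.Nonempty → q'.LengthAtLeast K) := by
  classical
  induction S using Finset.induction_on with
  | empty => exact ⟨N, q, id, fun _ => id, hq, .refl q, fun _ _ => rfl, by simp, by simp⟩
  | insert i S _ ih =>
    obtain ⟨N', q', p, σ, hq', hqq', hpσ, hσ, -⟩ := ih
    obtain ⟨q'', hq'', hrefines, hlong⟩ := hG _ hq' (σ false i) K
    refine ⟨N' + 1, q'', p ∘ Fin.lastCases (σ false i) id,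
      fun b j => if b = true ∧ j = i then Fin.last N' else (σ b j).castSucc, hq'',
      hqq'.trans hrefines, fun b j => ?_, fun j hj => ?_, fun _ => hlong⟩
    · by_cases h : b = true ∧ j = i
      · obtain ⟨rfl, rfl⟩ := h
        simp [hpσ]
      · simp [h, hpσ]
    · rcases Finset.mem_insert.1 hj with rfl | hj
      · simp
      · simpa [show j ≠ i by rintro rfl; contradiction] using hσ j hj

variable (G) in
/-- Stage `n` of a Cantor scheme: the branches `ρ : Fin n → Bool` sit at distinct points `ι ρ`
of a configuration in `G`. -/
structure Level (n : ℕ) where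
  N : ℕ
  q : Config N
  mem : ⟨N, q⟩ ∈ G
  ι : (Fin n → Bool) → Fin N
  injective : Injective ι
  long : q.LengthAtLeast n

lemma exists_level_succ (hG : IsSplitClosed G) {n : ℕ} (L : Level G n) :
    ∃ L' : Level G (n + 1), ∃ p, L.q.Refines L'.q p ∧ ∀ ψ, p (L'.ι ψ) = L.ι (Fin.init ψ) := by
  have hS : (Finset.univ : Finset (Fin L.N)).Nonempty := ⟨L.ι fun _ => false, Finset.mem_univ _⟩
  obtain ⟨N', q', p, σ, hq', hqq', hpσ, hσ, hlong⟩ :=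
    exists_refines_split hG L.mem (n + 1) Finset.univ
  let ι' : (Fin (n + 1) → Bool) → Fin N' := fun ψ => σ (ψ (Fin.last n)) (L.ι (Fin.init ψ))
  have hpι : ∀ ψ, p (ι' ψ) = L.ι (Fin.init ψ) := fun ψ => hpσ _ _
  have hι' : Injective ι' := by
    intro ψ ψ' h
    have hinit : Fin.init ψ = Fin.init ψ' := L.injective (by rw [← hpι, ← hpι, h])
    have hlast : ψ (Fin.last n) = ψ' (Fin.last n) := by
      simp only [ι', hinit] at h
      exact (Bool.injective_iff (f := fun b => σ b _)).2 (hσ _ (Finset.mem_univ _)) h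
    rw [← Fin.snoc_init_self ψ, ← Fin.snoc_init_self ψ', hinit, hlast]
  exact ⟨⟨N', q', hq', ι', hι', hlong hS⟩, p, hqq', hpι⟩

variable (G) in
structure Scheme where
  level : ∀ n, Level G n
  link : ∀ n, ∃ p, (level n).q.Refines (level (n + 1)).q p ∧
    ∀ ψ, p ((level (n + 1)).ι ψ) = (level n).ι (Fin.init ψ)

lemma nonempty_scheme (hG : IsSplitClosed G) (L : Level G 0) : Nonempty (Scheme G) := by
  choose next hnext using fun n (L : Level G n) => exists_level_succ hG L
  let level : ∀ n, Level G n := fun n => Nat.rec L (fun n L => next n L) n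
  exact ⟨⟨level, fun n => hnext n (level n)⟩⟩

def restrict (a : ℕ → Bool) (n : ℕ) : Fin n → Bool := fun t => a t

@[simp] lemma init_restrict (a : ℕ → Bool) (n : ℕ) :
    Fin.init (restrict a (n + 1)) = restrict a n :=
  rfl

namespace Scheme

variable (S : Scheme G)

def pt (a : ℕ → Bool) (n : ℕ) : List Bool := (S.level n).q.pt ((S.level n).ι (restrict a n))

def wit (a b : ℕ → Bool) (n : ℕ) : List ℕ :=
  (S.level n).q.wit ((S.level n).ι (restrict a n)) ((S.level n).ι (restrict b n))

lemma pt_prefix_succ (a : ℕ → Bool) (n : ℕ) : S.pt a n <+: S.pt a (n + 1) := by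
  obtain ⟨p, hp, hpι⟩ := S.link n
  simpa only [pt, hpι, init_restrict] using hp.1 ((S.level (n + 1)).ι (restrict a (n + 1)))

lemma wit_prefix_succ {a b : ℕ → Bool} {n : ℕ} (h : restrict a n ≠ restrict b n ∨ a = b) :
    S.wit a b n <+: S.wit a b (n + 1) := by
  obtain ⟨p, hp, hpι⟩ := S.link n
  have := hp.2 ((S.level (n + 1)).ι (restrict a (n + 1)))
    ((S.level (n + 1)).ι (restrict b (n + 1)))
  simp only [hpι, init_restrict] at this
  refine this ?_
  rcases h with h | rfl
  · exact Or.inl ((S.level n).injective.ne h)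
  · exact Or.inr rfl

lemma le_length_pt (a : ℕ → Bool) (n : ℕ) : n ≤ (S.pt a n).length := (S.level n).long.1 _

lemma le_length_wit (a b : ℕ → Bool) (n : ℕ) : n ≤ (S.wit a b n).length :=
  (S.level n).long.2 _ _

def limitMap (a : ℕ → Bool) : ℕ → Bool := chainLimit (S.pt a)

lemma limitMap_mem_cylinder (a : ℕ → Bool) (n : ℕ) : S.limitMap a ∈ cylinder (S.pt a n) :=
  chainLimit_mem_cylinder (S.pt_prefix_succ a) (S.le_length_pt a) n

lemma continuous_limitMap : Continuous S.limitMap := by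
  refine continuous_pi fun t => ?_
  change Continuous ((fun ρ => ((S.level (t + 1)).q.pt ((S.level (t + 1)).ι ρ)).getD t false) ∘
    fun a => restrict a (t + 1))
  exact continuous_of_discreteTopology.comp (continuous_pi fun _ => continuous_apply _)

lemma injective_limitMap (hsep : ∀ q ∈ G, q.2.Separated) : Injective S.limitMap := by
  intro a b hab
  by_contra hne
  obtain ⟨t, ht⟩ := Function.ne_iff.1 hne
  have hr : restrict a (t + 1) ≠ restrict b (t + 1) := fun h =>
    ht (congrFun h ⟨t, t.lt_succ_self⟩)
  refine Set.disjoint_left.1 (hsep _ (S.level (t + 1)).mem ((S.level (t + 1)).injective.ne hr))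
    (S.limitMap_mem_cylinder a (t + 1)) ?_
  exact hab ▸ S.limitMap_mem_cylinder b (t + 1)

lemma exists_eq_limitMap (hwit : ∀ q ∈ G, q.2.Witnessed f) (hf : Continuous f)
    (a b : ℕ → Bool) :
    ∃ ν, f ν = (S.limitMap a, S.limitMap b) := by
  obtain ⟨n₀, hn₀⟩ : ∃ n₀, ∀ n ≥ n₀, restrict a n ≠ restrict b n ∨ a = b := by
    by_cases hab : a = b
    · exact ⟨0, fun _ _ => Or.inr hab⟩
    obtain ⟨t, ht⟩ := Function.ne_iff.1 hab
    exact ⟨t + 1, fun n hn => Or.inl fun h => ht (congrFun h ⟨t, hn⟩)⟩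
  -- below level `n₀` the branches of `a` and `b` may share a point, and splitting it
  -- creates a pair with a fresh witness
  let w : ℕ → List ℕ := fun n => S.wit a b (n + n₀)
  have hw : ∀ n, w n <+: w (n + 1) := fun n => by
    simpa only [w, Nat.add_right_comm] using S.wit_prefix_succ (hn₀ (n + n₀) (by omega))
  have hwlen : ∀ n, n ≤ (w n).length := fun n =>
    (Nat.le_add_right _ _).trans (S.le_length_wit ..)
  choose ν hνw hνf using fun n => hwit _ (S.level (n + n₀)).mem
    ((S.level (n + n₀)).ι (restrict a (n + n₀))) ((S.level (n + n₀)).ι (restrict b (n + n₀)))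
  have hlim : Tendsto ν atTop (𝓝 (chainLimit w)) :=
    tendsto_of_mem_cylinder hνw (chainLimit_mem_cylinder hw hwlen) hwlen
  have hpt : ∀ c : ℕ → Bool, ∀ n, n ≤ (S.pt c (n + n₀)).length := fun c n =>
    (Nat.le_add_right _ _).trans (S.le_length_pt ..)
  have hfν : Tendsto (fun n => f (ν n)) atTop (𝓝 (S.limitMap a, S.limitMap b)) :=
    (tendsto_of_mem_cylinder (fun n => (hνf n).1) (fun n => S.limitMap_mem_cylinder a _)
      (hpt a)).prodMk_nhds
    (tendsto_of_mem_cylinder (fun n => (hνf n).2) (fun n => S.limitMap_mem_cylinder b _) (hpt b))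
  exact ⟨chainLimit w, tendsto_nhds_unique ((hf.tendsto _).comp hlim) hfν⟩

end Scheme

theorem exists_perfect_square_of_isSplitClosed (hf : Continuous f) (hG : IsSplitClosed G)
    (hsep : ∀ q ∈ G, q.2.Separated) (hwit : ∀ q ∈ G, q.2.Witnessed f) {N : ℕ} {q : Config N}
    (hq : ⟨N, q⟩ ∈ G) (hN : 0 < N) :
    ∃ P : Set (ℕ → Bool), Perfect P ∧ P.Nonempty ∧ P ×ˢ P ⊆ Set.range f := by
  obtain ⟨S⟩ := nonempty_scheme hG ⟨N, q, hq, fun _ => ⟨0, hN⟩,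
    fun _ _ _ => Subsingleton.elim _ _, ⟨fun _ => Nat.zero_le _, fun _ _ => Nat.zero_le _⟩⟩
  refine ⟨Set.range S.limitMap,
    perfect_range_of_continuous_injective S.continuous_limitMap (S.injective_limitMap hsep),
    Set.range_nonempty _, ?_⟩
  rintro ⟨_, _⟩ ⟨⟨a, rfl⟩, ⟨b, rfl⟩⟩
  exact S.exists_eq_limitMap hwit hf a b

end CantorScheme

theorem exists_perfect_square_of_derived (hf : Continuous f)
    (h : ∀ β < (aleph 1).ord, ∃ q ∈ derived f β, 0 < q.1) :
    ∃ P : Set (ℕ → Bool), Perfect P ∧ P.Nonempty ∧ P ×ˢ P ⊆ Set.range f := by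
  obtain ⟨δ, hδ, hstable⟩ := exists_lt_omega_one_subset_succ (derived_antitone (f := f))
  obtain ⟨⟨N, q⟩, hq, hN⟩ := h δ hδ
  have hmem : ∀ q ∈ derived f δ, q.2.Separated ∧ q.2.Witnessed f := fun q hq => by
    rw [derived] at hq
    exact ⟨hq.1, hq.2.1⟩
  exact exists_perfect_square_of_isSplitClosed hf (isSplitClosed_derived hstable)
    (fun q hq => (hmem q hq).1) (fun q hq => (hmem q hq).2) hq hN

theorem stmt_8 (lam : Cardinal.{0})
    (hPr : Pr 0 (Cardinal.aleph 1).ord lam (Cardinal.aleph 1) ℵ₀)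
    (B : Set ((ℕ → Bool) × (ℕ → Bool))) (hB : MeasureTheory.AnalyticSet B)
    (A : Set (ℕ → Bool)) (hA : Cardinal.mk A = lam) (hAB : A ×ˢ A ⊆ B) :
    ∃ P : Set (ℕ → Bool), Perfect P ∧ P.Nonempty ∧ P ×ˢ P ⊆ B := by
  have hA_ne : A.Nonempty :=
    Set.nonempty_coe_sort.1 (hPr.nonempty (Cardinal.ord_pos.2 (aleph_pos 1)) hA)
  rw [MeasureTheory.AnalyticSet] at hB
  obtain ⟨f, hf, rfl⟩ := hB.resolve_left ((hA_ne.prod hA_ne).mono hAB).ne_empty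
  choose η hη using fun x y : A => hAB (Set.mk_mem_prod x.2 y.2)
  refine exists_perfect_square_of_derived hf fun β hβ => ?_
  obtain ⟨w, hw, hw_ne, hrk⟩ :=
    hPr configLanguage A (configStructure η) hA card_configLanguage β hβ
  exact exists_mem_derived_of_rkGe hη hw hw_ne hrk

end Sh522
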